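/- arXiv:math/0405268 — 4 statements merged into one kernel-verified Lean document; each statement's English description precedes it below -/
import Mathlib

section
/- Let m = (m^0, m^1) be a regular factor map from a topological graph F to a topological graph E. Then (m^0)^{-1}(E^0_rg) ⊆ F^0_rg. -/
open Set Filter OnePoint

namespace TopGraphAux

/-- `E⁰_sce`: the open set of sources of a topological graph. -/
def graphSce {E0 E1 : Type*} [TopologicalSpace E0] (r : E1 → E0) : Set E0 :=
  (closure (Set.range r))ᶜ

/-- `E⁰_fin`: vertices having a neighborhood whose `r`-preimage is compact. -/
def graphFin {E0 E1 : Type*} [TopologicalSpace E0] [TopologicalSpace E1] (r : E1 → E0) :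
    Set E0 :=
  {v | ∃ V ∈ nhds v, IsCompact (r ⁻¹' V)}

/-- `E⁰_rg`: the open set of regular vertices of a topological graph. -/
def graphRg {E0 E1 : Type*} [TopologicalSpace E0] [TopologicalSpace E1] (r : E1 → E0) :
    Set E0 :=
  graphFin r \ closure (graphSce r)

/-- A factor map from the topological graph `F = (F0, F1, dF, rF)` to the topological graph
`E = (E0, E1, dE, rE)`: a pair of continuous maps between one-point compactifications sending
`∞` to `∞`, intertwining range and domain maps, and with the unique edge-lifting property. -/
structure IsFactorMap {E0 E1 F0 F1 : Type*}
    [TopologicalSpace E0] [TopologicalSpace E1] [TopologicalSpace F0] [TopologicalSpace F1]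
    (dE rE : E1 → E0) (dF rF : F1 → F0)
    (m0 : OnePoint F0 → OnePoint E0) (m1 : OnePoint F1 → OnePoint E1) : Prop where
  continuous_m0 : Continuous m0
  continuous_m1 : Continuous m1
  map_infty0 : m0 ∞ = ∞
  map_infty1 : m1 ∞ = ∞
  compat : ∀ (e : F1) (e' : E1), m1 ↑e = ↑e' →
    (↑(rE e') : OnePoint E0) = m0 ↑(rF e) ∧ (↑(dE e') : OnePoint E0) = m0 ↑(dF e)
  lift : ∀ (e' : E1) (v : F0), (↑(dE e') : OnePoint E0) = m0 ↑v →
    ∃! e : F1, m1 ↑e = (↑e' : OnePoint E1) ∧ dF e = v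

/-- Regularity of a factor map: every vertex mapping to a regular vertex receives an edge,
and all edges it receives are mapped to genuine edges. -/
def IsRegularFactorMap {E0 E1 F0 F1 : Type*}
    [TopologicalSpace E0] [TopologicalSpace E1] [TopologicalSpace F0] [TopologicalSpace F1]
    (rE : E1 → E0) (rF : F1 → F0)
    (m0 : OnePoint F0 → OnePoint E0) (m1 : OnePoint F1 → OnePoint E1) : Prop :=
  ∀ (v : F0) (w : E0), m0 ↑v = ↑w → w ∈ graphRg rE →
    (∃ e : F1, rF e = v) ∧ ∀ e : F1, rF e = v → ∃ e' : E1, m1 ↑e = ↑e'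

/-- `f` restricts to a homeomorphism from `U` onto `V`. -/
def IsHomeoOn {X Y : Type*} [TopologicalSpace X] [TopologicalSpace Y]
    (f : X → Y) (U : Set X) (V : Set Y) : Prop :=
  ∃ h : U ≃ₜ V, ∀ x : U, (h x : Y) = f (x : X)

/-- Extension of a map `A → OnePoint B` to the one-point compactification, sending `∞` to `∞`. -/
def onePointLift {A B : Type*} (f : A → OnePoint B) : OnePoint A → OnePoint B :=
  fun x => Option.elim x ∞ f

/-- The relation identifying the copy in `S` of each point of `B ⊆ S` with the corresponding
point of `X`. -/
def glueRel {X : Type*} (S B : Set X) : (X ⊕ ↥S) → (X ⊕ ↥S) → Prop :=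
  fun a b => ∃ x : ↥S, (x : X) ∈ B ∧
    ((a = Sum.inl ↑x ∧ b = Sum.inr x) ∨ (a = Sum.inr x ∧ b = Sum.inl ↑x))

/-- The space `X ⨿_B S` obtained from `X ⊔ S` by identifying the two copies of each point
of `B ⊆ S ⊆ X`. -/
def Glue (X : Type*) (S B : Set X) : Type _ := Quot (glueRel S B)

instance {X : Type*} [TopologicalSpace X] (S B : Set X) : TopologicalSpace (Glue X S B) :=
  inferInstanceAs (TopologicalSpace (Quot _))

/-- The canonical inclusion `X → X ⨿_B S`. -/
def Glue.inl {X : Type*} {S B : Set X} (x : X) : Glue X S B := Quot.mk _ (Sum.inl x)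

/-- The inclusion of the extra copy `S → X ⨿_B S`. -/
def Glue.inr {X : Type*} {S B : Set X} (x : ↥S) : Glue X S B := Quot.mk _ (Sum.inr x)

/-- The extension `d_Y` of the domain map `d` to the graph `E_Y`. -/
def glueD {E0 E1 : Type*} [TopologicalSpace E0] (d : E1 → E0) (Y : Set E0) :
    Glue E1 (d ⁻¹' closure Y) (d ⁻¹' (closure Y \ Y)) → Glue E0 (closure Y) (closure Y \ Y) :=
  Quot.lift
    (Sum.elim (fun e => Glue.inl (d e)) (fun e => Glue.inr ⟨d e.1, e.2⟩))
    (by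
      rintro a b ⟨x, hx, (⟨rfl, rfl⟩ | ⟨rfl, rfl⟩)⟩
      · exact Quot.sound ⟨⟨d x.1, x.2⟩, hx, Or.inl ⟨rfl, rfl⟩⟩
      · exact (Quot.sound ⟨⟨d x.1, x.2⟩, hx, Or.inl ⟨rfl, rfl⟩⟩).symm)

/-- The extension `r_Y` of the range map `r` to the graph `E_Y`. -/
def glueR {E0 E1 : Type*} [TopologicalSpace E0] (d r : E1 → E0) (Y : Set E0) :
    Glue E1 (d ⁻¹' closure Y) (d ⁻¹' (closure Y \ Y)) → Glue E0 (closure Y) (closure Y \ Y) :=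
  Quot.lift (Sum.elim (fun e => Glue.inl (r e)) (fun e => Glue.inl (r e.1)))
    (by rintro a b ⟨x, hx, (⟨rfl, rfl⟩ | ⟨rfl, rfl⟩)⟩ <;> rfl)

/-- The projection from the glued space back onto the original space. -/
def glueProj {X : Type*} (S B : Set X) : Glue X S B → X :=
  Quot.lift (Sum.elim id Subtype.val)
    (by rintro a b ⟨x, hx, (⟨rfl, rfl⟩ | ⟨rfl, rfl⟩)⟩ <;> rfl)

/-- A point of the projective limit `E^i = Ẽ^i \ {∞}`: a compatible thread of points of the
one-point compactifications, not all equal to `∞`. -/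
structure LimPt {Λ : Type*} [Preorder Λ] (X : Λ → Type*)
    (m : ∀ ⦃l l' : Λ⦄, l ≤ l' → OnePoint (X l') → OnePoint (X l)) where
  pt : ∀ l, OnePoint (X l)
  compat : ∀ ⦃l l' : Λ⦄ (h : l ≤ l'), m h (pt l') = pt l
  exists_ne_infty : ∃ l, pt l ≠ ∞

instance {Λ : Type*} [Preorder Λ] (X : Λ → Type*) [∀ l, TopologicalSpace (X l)]
    (m : ∀ ⦃l l' : Λ⦄, l ≤ l' → OnePoint (X l') → OnePoint (X l)) :
    TopologicalSpace (LimPt X m) :=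
  TopologicalSpace.induced LimPt.pt inferInstance

/-- Topological freeness: the set of base points of loops without entrances has empty
interior. -/
def IsTopologicallyFree {E0 E1 : Type*} [TopologicalSpace E0] (d r : E1 → E0) : Prop :=
  interior {v : E0 | ∃ (n : ℕ) (hn : 0 < n) (e : Fin n → E1),
      (∀ k : Fin n, d (e k) = r (e ⟨(k.1 + 1) % n, Nat.mod_lt _ hn⟩)) ∧
      (∀ (k : Fin n) (e' : E1), r e' = r (e k) → e' = e k) ∧
      r (e ⟨0, hn⟩) = v} = ∅

open scoped Classical in
/-- Partial iteration of a partially defined map `σ` with domain `W`: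
`sgdsIter σ n x = some y` iff `x ∈ dom (σ^n)` and `σ^n x = y`. -/
noncomputable def sgdsIter {X : Type*} {W : Set X} (σ : ↥W → X) : ℕ → X → Option X
  | 0, x => Option.some x
  | n + 1, x => if h : x ∈ W then sgdsIter σ n (σ ⟨x, h⟩) else none


lemma isOpen_graphFin' {E0 E1 : Type*} [TopologicalSpace E0] [TopologicalSpace E1]
    (r : E1 → E0) : IsOpen (graphFin r) := by
  rw [isOpen_iff_mem_nhds]
  rintro v ⟨V, hV, hK⟩
  filter_upwards [interior_mem_nhds.mpr hV] with v' hv'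
  exact ⟨V, mem_nhds_iff.mpr ⟨interior V, interior_subset, isOpen_interior, hv'⟩, hK⟩

lemma isOpen_graphRg' {E0 E1 : Type*} [TopologicalSpace E0] [TopologicalSpace E1]
    (r : E1 → E0) : IsOpen (graphRg r) :=
  (isOpen_graphFin' r).sdiff isClosed_closure

/-- For a regular factor map `m` from `F` to `E`,
`(m⁰)⁻¹(E⁰_rg) ⊆ F⁰_rg`. -/
theorem statement2
    {E0 E1 F0 F1 : Type*}
    [TopologicalSpace E0] [TopologicalSpace E1] [T2Space E0] [T2Space E1]
    [LocallyCompactSpace E0] [LocallyCompactSpace E1]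
    [TopologicalSpace F0] [TopologicalSpace F1] [T2Space F0] [T2Space F1]
    [LocallyCompactSpace F0] [LocallyCompactSpace F1]
    (dE rE : E1 → E0) (hdE : IsLocalHomeomorph dE) (hrE : Continuous rE)
    (dF rF : F1 → F0) (hdF : IsLocalHomeomorph dF) (hrF : Continuous rF)
    (m0 : OnePoint F0 → OnePoint E0) (m1 : OnePoint F1 → OnePoint E1)
    (hm : IsFactorMap dE rE dF rF m0 m1)
    (hreg : IsRegularFactorMap rE rF m0 m1) :
    ∀ (v : F0) (w : E0), m0 ↑v = ↑w → w ∈ graphRg rE → v ∈ graphRg rF := by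
  intro v w hvw hw
  obtain ⟨⟨W, hWnhds, hWcpt⟩, hwnc⟩ := hw
  have hcont0 : Continuous (fun v' : F0 => m0 ↑v') :=
    hm.continuous_m0.comp OnePoint.continuous_coe
  -- the open set O around w inside interior W ∩ graphRg rE
  set O : Set E0 := interior W ∩ graphRg rE with hO
  have hOopen : IsOpen O := isOpen_interior.inter (isOpen_graphRg' rE)
  have hwO : w ∈ O := ⟨mem_interior_iff_mem_nhds.mpr hWnhds, ⟨W, hWnhds, hWcpt⟩, hwnc⟩
  -- the open set V around v
  set V : Set F0 := (fun v' : F0 => m0 ↑v') ⁻¹' (((↑) : E0 → OnePoint E0) '' O) with hV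
  have hVopen : IsOpen V :=
    (OnePoint.isOpenEmbedding_coe.isOpenMap _ hOopen).preimage hcont0
  have hvV : v ∈ V := ⟨w, hwO, hvw.symm⟩
  -- the compact set in OnePoint F1
  set L : Set (OnePoint F1) :=
    m1 ⁻¹' (((↑) : E1 → OnePoint E1) '' (rE ⁻¹' W)) with hL
  have hKcpt : IsCompact (((↑) : E1 → OnePoint E1) '' (rE ⁻¹' W)) :=
    hWcpt.image OnePoint.continuous_coe
  have hLclosed : IsClosed L := hKcpt.isClosed.preimage hm.continuous_m1
  have hLcpt : IsCompact L := hLclosed.isCompact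
  have hLrange : L ⊆ range ((↑) : F1 → OnePoint F1) := by
    intro x hx
    cases x with
    | infty =>
      exfalso
      have hx' : m1 ∞ ∈ ((↑) : E1 → OnePoint E1) '' (rE ⁻¹' W) := hx
      rw [hm.map_infty1] at hx'
      obtain ⟨e', -, he'⟩ := hx'
      exact OnePoint.coe_ne_infty e' he'
    | coe e => exact ⟨e, rfl⟩
  have hCcpt : IsCompact (((↑) : F1 → OnePoint F1) ⁻¹' L) := by
    rw [OnePoint.isOpenEmbedding_coe.isEmbedding.isCompact_iff]
    rwa [Set.image_preimage_eq_of_subset hLrange]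
  -- rF ⁻¹' V ⊆ coe ⁻¹' L
  have hsub : rF ⁻¹' V ⊆ ((↑) : F1 → OnePoint F1) ⁻¹' L := by
    intro e he
    obtain ⟨w', hw'O, hw'eq⟩ := he
    obtain ⟨-, hmap⟩ := hreg (rF e) w' hw'eq.symm hw'O.2
    obtain ⟨e', he'⟩ := hmap e rfl
    have hcompat := (hm.compat e e' he').1
    have hre : rE e' = w' := by
      exact OnePoint.coe_injective (hcompat.trans hw'eq.symm)
    exact ⟨e', (show rE e' ∈ W from hre ▸ interior_subset hw'O.1), he'.symm⟩
  constructor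
  · -- v ∈ graphFin rF
    obtain ⟨K', hK'cpt, hvK', hK'V⟩ := exists_compact_subset hVopen hvV
    refine ⟨K', mem_nhds_iff.mpr ⟨interior K', interior_subset, isOpen_interior, hvK'⟩, ?_⟩
    refine IsCompact.of_isClosed_subset hCcpt (hK'cpt.isClosed.preimage hrF) ?_
    exact fun e he => hsub (hK'V he)
  · -- v ∉ closure (graphSce rF)
    intro hcl
    rw [mem_closure_iff] at hcl
    set U' : Set F0 :=
      (fun v' : F0 => m0 ↑v') ⁻¹' (((↑) : E0 → OnePoint E0) '' graphRg rE) with hU'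
    have hU'open : IsOpen U' :=
      (OnePoint.isOpenEmbedding_coe.isOpenMap _ (isOpen_graphRg' rE)).preimage hcont0
    have hvU' : v ∈ U' := ⟨w, ⟨⟨W, hWnhds, hWcpt⟩, hwnc⟩, hvw.symm⟩
    obtain ⟨x, hxU, hxsce⟩ := hcl U' hU'open hvU'
    obtain ⟨w', hw'rg, hw'eq⟩ := hxU
    obtain ⟨⟨e, he⟩, -⟩ := hreg x w' hw'eq.symm hw'rg
    exact hxsce (subset_closure ⟨e, he⟩)

end TopGraphAux
end

section
/- Let m = (m^0, m^1) be a factor map from a topological graph F to a topological graph E. If U ⊆ E^1 is an open set such that the restriction of d_E to U is a homeomorphism onto the open set d_E(U) ⊆ E^0, then the restriction of d_F to the open set (m^1)^{-1}(U) ⊆ F^1 is a homeomorphism onto the open set (m^0)^{-1}(d_E(U)) ⊆ F^0. -/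
/-!
Both sets are open because `m⁰` and `m¹` are continuous and `X ↪ X̃` is an open embedding.
The unique lifting property of `m` says that `d_F` maps `(m¹)⁻¹(U)` onto `(m⁰)⁻¹(d_E(U))`, and,
since `d_E` is injective on `U`, also injectively; an injective restriction of the continuous
open map `d_F` to an open set is a homeomorphism onto its image.
-/

open Set Filter OnePoint

namespace TopGraphAux

open Topology

theorem IsHomeoOn.injOn {X Y : Type*} [TopologicalSpace X] [TopologicalSpace Y]
    {f : X → Y} {U : Set X} {V : Set Y} (h : IsHomeoOn f U V) : InjOn f U := by
  obtain ⟨φ, hφ⟩ := h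
  intro x hx y hy hxy
  have : φ ⟨x, hx⟩ = φ ⟨y, hy⟩ := Subtype.ext (by rw [hφ, hφ]; exact hxy)
  exact congrArg Subtype.val (φ.injective this)

theorem isHomeoOn_of_injOn {X Y : Type*} [TopologicalSpace X] [TopologicalSpace Y]
    {f : X → Y} (hf : Continuous f) (hfo : IsOpenMap f) {U : Set X} (hU : IsOpen U)
    (hinj : InjOn f U) : IsHomeoOn f U (f '' U) := by
  have hemb : IsOpenEmbedding (U.domRestrict f) :=
    .of_continuous_injective_isOpenMap (hf.comp continuous_subtype_val) hinj.injective
      (hfo.domRestrict hU)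
  exact ⟨hemb.isEmbedding.toHomeomorph.trans (.setCongr (range_domRestrict f U)), fun _ => rfl⟩

theorem isOpen_setOf_exists_coe_eq {X Y : Type*} [TopologicalSpace X] [TopologicalSpace Y]
    {m : OnePoint X → OnePoint Y} (hm : Continuous m) {U : Set Y} (hU : IsOpen U) :
    IsOpen {x : X | ∃ u ∈ U, m x = u} := by
  have : {x : X | ∃ u ∈ U, m x = u} = (m ∘ (↑)) ⁻¹' ((↑) '' U) := by
    ext x; simp [eq_comm]
  rw [this]
  exact (isOpenMap_coe _ hU).preimage (hm.comp continuous_coe)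

namespace IsFactorMap

variable {E0 E1 F0 F1 : Type*}
  [TopologicalSpace E0] [TopologicalSpace E1] [TopologicalSpace F0] [TopologicalSpace F1]
  {dE rE : E1 → E0} {dF rF : F1 → F0}
  {m0 : OnePoint F0 → OnePoint E0} {m1 : OnePoint F1 → OnePoint E1}

theorem image_d_preimage (hm : IsFactorMap dE rE dF rF m0 m1) (U : Set E1) :
    dF '' {e : F1 | ∃ u ∈ U, m1 e = u} = {v : F0 | ∃ w ∈ dE '' U, m0 v = w} := by
  ext v
  constructor
  · rintro ⟨e, ⟨u, hu, hme⟩, rfl⟩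
    exact ⟨dE u, mem_image_of_mem dE hu, (hm.compat e u hme).2.symm⟩
  · rintro ⟨_, ⟨u, hu, rfl⟩, hmv⟩
    obtain ⟨e, ⟨hme, hde⟩, -⟩ := hm.lift u v hmv.symm
    exact ⟨e, ⟨u, hu, hme⟩, hde⟩

theorem injOn_d_preimage (hm : IsFactorMap dE rE dF rF m0 m1) {U : Set E1}
    (hU : InjOn dE U) : InjOn dF {e : F1 | ∃ u ∈ U, m1 e = u} := by
  rintro e₁ ⟨u₁, hu₁, hm₁⟩ e₂ ⟨u₂, hu₂, hm₂⟩ hd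
  have hd₁ := (hm.compat e₁ u₁ hm₁).2
  have hd₂ := (hm.compat e₂ u₂ hm₂).2
  obtain rfl : u₁ = u₂ := hU hu₁ hu₂ (coe_injective (by rw [hd₁, hd₂, hd]))
  -- both `e₁` and `e₂` are the unique lift of `u₁` with source `dF e₁`
  obtain ⟨e, -, huniq⟩ := hm.lift u₁ (dF e₁) hd₁
  rw [huniq e₁ ⟨hm₁, rfl⟩, huniq e₂ ⟨hm₂, hd.symm⟩]

end IsFactorMap

theorem statement4_general
    {E0 E1 F0 F1 : Type*}
    [TopologicalSpace E0] [TopologicalSpace E1]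
    [TopologicalSpace F0] [TopologicalSpace F1]
    (dE rE : E1 → E0)
    (dF rF : F1 → F0) (hdF : IsLocalHomeomorph dF)
    (m0 : OnePoint F0 → OnePoint E0) (m1 : OnePoint F1 → OnePoint E1)
    (hm : IsFactorMap dE rE dF rF m0 m1)
    (U : Set E1) (hU : IsOpen U) (hdU : IsOpen (dE '' U))
    (hhomeo : IsHomeoOn dE U (dE '' U)) :
    IsOpen {e : F1 | ∃ u ∈ U, m1 ↑e = ↑u} ∧
    IsOpen {v : F0 | ∃ w ∈ dE '' U, m0 ↑v = ↑w} ∧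
    IsHomeoOn dF {e : F1 | ∃ u ∈ U, m1 ↑e = ↑u} {v : F0 | ∃ w ∈ dE '' U, m0 ↑v = ↑w} := by
  have hU' : IsOpen {e : F1 | ∃ u ∈ U, m1 ↑e = ↑u} :=
    isOpen_setOf_exists_coe_eq hm.continuous_m1 hU
  refine ⟨hU', isOpen_setOf_exists_coe_eq hm.continuous_m0 hdU, ?_⟩
  rw [← hm.image_d_preimage U]
  exact isHomeoOn_of_injOn hdF.continuous hdF.isOpenMap hU'
    (hm.injOn_d_preimage hhomeo.injOn)

/-- If a factor map `m : F → E` is given and `d_E` restricts to a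
homeomorphism from an open set `U ⊆ E¹` onto the open set `d_E(U) ⊆ E⁰`, then `d_F`
restricts to a homeomorphism from the open set `(m¹)⁻¹(U) ⊆ F¹` onto the open set
`(m⁰)⁻¹(d_E(U)) ⊆ F⁰`. -/
theorem statement4
    {E0 E1 F0 F1 : Type*}
    [TopologicalSpace E0] [TopologicalSpace E1] [T2Space E0] [T2Space E1]
    [LocallyCompactSpace E0] [LocallyCompactSpace E1]
    [TopologicalSpace F0] [TopologicalSpace F1] [T2Space F0] [T2Space F1]
    [LocallyCompactSpace F0] [LocallyCompactSpace F1]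
    (dE rE : E1 → E0) (hdE : IsLocalHomeomorph dE) (hrE : Continuous rE)
    (dF rF : F1 → F0) (hdF : IsLocalHomeomorph dF) (hrF : Continuous rF)
    (m0 : OnePoint F0 → OnePoint E0) (m1 : OnePoint F1 → OnePoint E1)
    (hm : IsFactorMap dE rE dF rF m0 m1)
    (U : Set E1) (hU : IsOpen U) (hdU : IsOpen (dE '' U))
    (hhomeo : IsHomeoOn dE U (dE '' U)) :
    IsOpen {e : F1 | ∃ u ∈ U, m1 ↑e = ↑u} ∧
    IsOpen {v : F0 | ∃ w ∈ dE '' U, m0 ↑v = ↑w} ∧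
    IsHomeoOn dF {e : F1 | ∃ u ∈ U, m1 ↑e = ↑u} {v : F0 | ∃ w ∈ dE '' U, m0 ↑v = ↑w} :=
  statement4_general dE rE dF rF hdF m0 m1 hm U hU hdU hhomeo

end TopGraphAux
end

section
/- Let ({E_λ}_{λ∈Λ}, {m_{λ,λ'}}_{λ⪯λ'}) be a projective system of topological graphs over a directed set Λ, and let (E^0, E^1, d, r) be its projective limit data. Then the maps d and r are well defined, d : E^1 → E^0 is a local homeomorphism, and r : E^1 → E^0 is continuous; hence E = (E^0, E^1, d, r) is a topological graph. -/
open Set Filter OnePoint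

namespace TopGraphAux

/-!
A thread of the limit is determined by its coordinates above any index where it is finite, so
the coordinatewise maps are well defined; they are continuous because near a thread each
coordinate is a bonding map applied to a finite-level map. The limit spaces are the complement of
the point `∞` in the compact space of all threads, hence locally compact.

For `d`, fix a thread `e`, an index `l` where `e` is finite, and a chart `φ` of `d_l` around
`e_l`. The unique lifting property of factor maps lifts `φ⁻¹ (v_l)` coherently to every level
above `l`; this inverts `d` on the open set of threads whose `l`-coordinate lies in the target of
`φ`. Near a given vertex the lift at level `ν` is `χ⁻¹ (v_ν)` for a chart `χ` of `d_ν`, so the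
inverse is continuous.
-/

open Topology

section Threads

variable {Λ : Type*} [Preorder Λ] {X : Λ → Type*}

def IsTransitiveSystem (p : ∀ ⦃l l' : Λ⦄, l ≤ l' → OnePoint (X l') → OnePoint (X l)) : Prop :=
  ∀ ⦃l l' l'' : Λ⦄ (h : l ≤ l') (h' : l' ≤ l'') (x : OnePoint (X l'')),
    p h (p h' x) = p (h.trans h') x

namespace LimPt

variable {p : ∀ ⦃l l' : Λ⦄, l ≤ l' → OnePoint (X l') → OnePoint (X l)}

theorem pt_injective : Function.Injective (pt : LimPt X p → ∀ l, OnePoint (X l)) := by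
  rintro ⟨a, _, _⟩ ⟨b, _, _⟩ rfl
  rfl

theorem pt_ne_infty_of_le (hinf : ∀ ⦃l l' : Λ⦄ (h : l ≤ l'), p h ∞ = ∞) (e : LimPt X p)
    {l l' : Λ} (h : l ≤ l') (hne : e.pt l ≠ ∞) : e.pt l' ≠ ∞ :=
  fun h' => hne (by rw [← e.compat h, h', hinf])

section Directed

variable [IsDirected Λ (· ≤ ·)]

theorem eq_of_forall_ge_pt_eq {a b : LimPt X p} (l0 : Λ)
    (h : ∀ ν, l0 ≤ ν → a.pt ν = b.pt ν) : a = b := by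
  refine pt_injective (funext fun μ => ?_)
  obtain ⟨ν, hμν, hl0ν⟩ := directed_of (· ≤ ·) μ l0
  rw [← a.compat hμν, ← b.compat hμν, h ν hl0ν]

theorem proj_eq_proj_of_ge (hp : IsTransitiveSystem p) {l0 : Λ} {f : ∀ l, OnePoint (X l)}
    (hf : ∀ ⦃l l' : Λ⦄ (_ : l0 ≤ l) (h : l ≤ l'), p h (f l') = f l)
    {μ ν ν' : Λ} (h : μ ≤ ν) (h' : μ ≤ ν') (hν : l0 ≤ ν) (hν' : l0 ≤ ν') :
    p h (f ν) = p h' (f ν') := by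
  obtain ⟨ρ, hνρ, hν'ρ⟩ := directed_of (· ≤ ·) ν ν'
  rw [← hf hν hνρ, ← hf hν' hν'ρ, hp, hp]

noncomputable def ofGE (hp : IsTransitiveSystem p) (l0 : Λ) (f : ∀ l, OnePoint (X l))
    (hf : ∀ ⦃l l' : Λ⦄ (_ : l0 ≤ l) (h : l ≤ l'), p h (f l') = f l) (hne : f l0 ≠ ∞) :
    LimPt X p where
  pt μ := p (directed_of (· ≤ ·) μ l0).choose_spec.1 (f (directed_of (· ≤ ·) μ l0).choose)
  compat l l' h := by
    rw [hp]
    exact proj_eq_proj_of_ge hp hf _ _ (directed_of (· ≤ ·) l' l0).choose_spec.2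
      (directed_of (· ≤ ·) l l0).choose_spec.2
  exists_ne_infty := ⟨l0, by rwa [hf le_rfl]⟩

variable {hp : IsTransitiveSystem p} {l0 : Λ} {f : ∀ l, OnePoint (X l)}
  {hf : ∀ ⦃l l' : Λ⦄ (_ : l0 ≤ l) (h : l ≤ l'), p h (f l') = f l} {hne : f l0 ≠ ∞}

theorem ofGE_pt {μ ν : Λ} (h : μ ≤ ν) (hν : l0 ≤ ν) : (ofGE hp l0 f hf hne).pt μ = p h (f ν) :=
  proj_eq_proj_of_ge hp hf _ h (directed_of (· ≤ ·) μ l0).choose_spec.2 hν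

theorem ofGE_pt_of_ge {μ : Λ} (h : l0 ≤ μ) : (ofGE hp l0 f hf hne).pt μ = f μ :=
  hf h _

end Directed

variable [∀ l, TopologicalSpace (X l)]

theorem isEmbedding_pt : IsEmbedding (pt : LimPt X p → ∀ l, OnePoint (X l)) :=
  ⟨⟨rfl⟩, pt_injective⟩

theorem continuous_pt_apply (l : Λ) : Continuous fun e : LimPt X p => e.pt l :=
  (continuous_apply l).comp isEmbedding_pt.continuous

theorem isOpen_setOf_pt_mem_image_coe (l : Λ) {S : Set (X l)} (hS : IsOpen S) :
    IsOpen {e : LimPt X p | e.pt l ∈ ((↑) : X l → OnePoint (X l)) '' S} :=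
  (isOpenEmbedding_coe.isOpenMap S hS).preimage (continuous_pt_apply l)

theorem t2Space [∀ l, T2Space (X l)] [∀ l, LocallyCompactSpace (X l)] :
    T2Space (LimPt X p) :=
  isEmbedding_pt.t2Space

theorem isLocallyClosed_range_pt [∀ l, T2Space (X l)] [∀ l, LocallyCompactSpace (X l)]
    (hcont : ∀ ⦃l l' : Λ⦄ (h : l ≤ l'), Continuous (p h)) :
    IsLocallyClosed (range (pt : LimPt X p → ∀ l, OnePoint (X l))) := by
  have hrange : range (pt : LimPt X p → ∀ l, OnePoint (X l)) =
      (⋃ l, {g | g l ∈ range ((↑) : X l → OnePoint (X l))}) ∩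
        ⋂ (l) (l') (h : l ≤ l'), {g | p h (g l') = g l} := by
    ext g
    simp only [mem_range, mem_inter_iff, mem_iUnion, mem_iInter, mem_ofPred_eq]
    constructor
    · rintro ⟨e, rfl⟩
      obtain ⟨l, hl⟩ := e.exists_ne_infty
      exact ⟨⟨l, ne_infty_iff_exists.mp hl⟩, fun l l' h => e.compat h⟩
    · rintro ⟨⟨l, x, hx⟩, hcompat⟩
      exact ⟨⟨g, fun l l' h => hcompat l l' h, ⟨l, hx ▸ coe_ne_infty x⟩⟩, rfl⟩
  have hopen : IsOpen (⋃ l, {g : ∀ l, OnePoint (X l) | g l ∈ range ((↑) : X l → OnePoint (X l))}) :=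
    isOpen_iUnion fun l => isOpen_range_coe.preimage (continuous_apply l)
  have hclosed : IsClosed (⋂ (l) (l') (h : l ≤ l'), {g : ∀ l, OnePoint (X l) | p h (g l') = g l}) :=
    isClosed_iInter fun l => isClosed_iInter fun l' => isClosed_iInter fun h =>
      isClosed_eq ((hcont h).comp (continuous_apply l')) (continuous_apply l)
  rw [hrange]
  exact hopen.isLocallyClosed.inter hclosed.isLocallyClosed

theorem locallyCompactSpace [∀ l, T2Space (X l)] [∀ l, LocallyCompactSpace (X l)]
    (hcont : ∀ ⦃l l' : Λ⦄ (h : l ≤ l'), Continuous (p h)) : LocallyCompactSpace (LimPt X p) :=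
  isEmbedding_pt.isInducing.locallyCompactSpace (isLocallyClosed_range_pt hcont)

end LimPt

end Threads

section Graph

variable {Λ : Type*} [Preorder Λ] {V E : Λ → Type*}
  {p0 : ∀ ⦃l l' : Λ⦄, l ≤ l' → OnePoint (V l') → OnePoint (V l)}
  {p1 : ∀ ⦃l l' : Λ⦄, l ≤ l' → OnePoint (E l') → OnePoint (E l)}

namespace LimPt

def LiesOver (q : ∀ l, E l → V l) (e : LimPt E p1) (v : LimPt V p0) : Prop :=
  ∀ (l : Λ) (x : E l), e.pt l = ↑x → v.pt l = ↑(q l x)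

section Directed

variable [IsDirected Λ (· ≤ ·)]

theorem LiesOver.unique (hinf1 : ∀ ⦃l l' : Λ⦄ (h : l ≤ l'), p1 h ∞ = ∞) {q : ∀ l, E l → V l}
    {e : LimPt E p1} {v v' : LimPt V p0} (hv : e.LiesOver q v) (hv' : e.LiesOver q v') :
    v = v' := by
  obtain ⟨l0, hl0⟩ := e.exists_ne_infty
  refine eq_of_forall_ge_pt_eq l0 fun ν hν => ?_
  obtain ⟨x, hx⟩ := ne_infty_iff_exists.mp (e.pt_ne_infty_of_le hinf1 hν hl0)
  rw [hv ν x hx.symm, hv' ν x hx.symm]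

theorem existsUnique_liesOver (hinf1 : ∀ ⦃l l' : Λ⦄ (h : l ≤ l'), p1 h ∞ = ∞)
    (hp0 : IsTransitiveSystem p0) (q : ∀ l, E l → V l)
    (hq : ∀ ⦃l l' : Λ⦄ (h : l ≤ l') (x' : E l') (x : E l),
      p1 h ↑x' = ↑x → (↑(q l x) : OnePoint (V l)) = p0 h ↑(q l' x'))
    (e : LimPt E p1) : ∃! v : LimPt V p0, e.LiesOver q v := by
  obtain ⟨l0, hl0⟩ := e.exists_ne_infty
  have hcoe : ∀ {ν} (_ : l0 ≤ ν), ∃ x : E ν, e.pt ν = ↑x := fun hν =>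
    (ne_infty_iff_exists.mp (e.pt_ne_infty_of_le hinf1 hν hl0)).imp fun _ hx => hx.symm
  let f : ∀ l, OnePoint (V l) := fun l => onePointLift (fun x => ↑(q l x)) (e.pt l)
  have hf_coe : ∀ {l} (x : E l), e.pt l = ↑x → f l = ↑(q l x) := fun x hx => by
    simp only [f, hx]
    rfl
  have hf : ∀ ⦃l l' : Λ⦄ (_ : l0 ≤ l) (h : l ≤ l'), p0 h (f l') = f l := by
    intro l l' hl h
    obtain ⟨x, hx⟩ := hcoe hl
    obtain ⟨x', hx'⟩ := hcoe (hl.trans h)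
    rw [hf_coe x hx, hf_coe x' hx', hq h x' x (by rw [← hx', e.compat h, hx])]
  have hne : f l0 ≠ ∞ := by
    obtain ⟨x, hx⟩ := hcoe le_rfl
    rw [hf_coe x hx]
    exact coe_ne_infty _
  have hlies : e.LiesOver q (ofGE hp0 l0 f hf hne) := by
    intro l x hx
    obtain ⟨ν, hlν, hl0ν⟩ := directed_of (· ≤ ·) l l0
    obtain ⟨x', hx'⟩ := hcoe hl0ν
    rw [ofGE_pt hlν hl0ν, hf_coe x' hx', hq hlν x' x (by rw [← hx', e.compat, hx])]
  exact ⟨_, hlies, fun v hv => hv.unique hinf1 hlies⟩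

end Directed

variable [∀ l, TopologicalSpace (V l)] [∀ l, TopologicalSpace (E l)] {d r : ∀ l, E l → V l}

theorem existsUnique_lift_of_le
    (hfac : ∀ ⦃l l' : Λ⦄ (h : l ≤ l'), IsFactorMap (d l) (r l) (d l') (r l') (p0 h) (p1 h))
    {l ν : Λ} (h : l ≤ ν) (v : LimPt V p0) {x : E l} (hx : v.pt l = ↑(d l x)) :
    ∃! z : E ν, p1 h ↑z = ↑x ∧ v.pt ν = ↑(d ν z) := by
  obtain ⟨w, hw⟩ := ne_infty_iff_exists.mp
    (v.pt_ne_infty_of_le (fun _ _ h => (hfac h).map_infty0) h (hx ▸ coe_ne_infty _))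
  obtain ⟨z, hz, huniq⟩ := (hfac h).lift x w (by rw [← hx, ← v.compat h, ← hw])
  refine ⟨z, ⟨hz.1, by rw [← hw, hz.2]⟩, fun z' hz' => huniq z' ⟨hz'.1, ?_⟩⟩
  exact coe_injective (hz'.2.symm.trans hw.symm)

theorem pt_eq_of_liesOver
    (hfac : ∀ ⦃l l' : Λ⦄ (h : l ≤ l'), IsFactorMap (d l) (r l) (d l') (r l') (p0 h) (p1 h))
    {e : LimPt E p1} {v : LimPt V p0} (hev : e.LiesOver d v) {l ν : Λ} (h : l ≤ ν) {x : E l}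
    (hx : e.pt l = ↑x) {z : E ν} (hz : p1 h ↑z = ↑x ∧ v.pt ν = ↑(d ν z)) : e.pt ν = ↑z := by
  obtain ⟨z', hz'⟩ := ne_infty_iff_exists.mp
    (e.pt_ne_infty_of_le (fun _ _ h => (hfac h).map_infty1) h (hx ▸ coe_ne_infty x))
  rw [← hz', (existsUnique_lift_of_le hfac h v (hev l x hx)).unique
    ⟨by rw [hz', e.compat, hx], hev ν z' hz'.symm⟩ hz]

theorem pt_eq_of_injOn
    (hfac : ∀ ⦃l l' : Λ⦄ (h : l ≤ l'), IsFactorMap (d l) (r l) (d l') (r l') (p0 h) (p1 h))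
    {e : LimPt E p1} {v : LimPt V p0} (hev : e.LiesOver d v) {l ν : Λ} (h : l ≤ ν)
    {S : Set (E l)} (hS : InjOn (d l) S) {x : E l} (hxS : x ∈ S) (hx : e.pt l = ↑x)
    {z : E ν} (hz : v.pt ν = ↑(d ν z)) {w : E l} (hwS : w ∈ S) (hw : p1 h ↑z = ↑w) :
    e.pt ν = ↑z := by
  have hdw : d l w = d l x :=
    coe_injective (by rw [((hfac h).compat z w hw).2, ← hz, v.compat, hev l x hx])
  refine pt_eq_of_liesOver hfac hev h hx ⟨?_, hz⟩
  rw [hw, hS hwS hxS hdw]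

theorem continuousWithinAt_pt_of_lift
    (hfac : ∀ ⦃l l' : Λ⦄ (h : l ≤ l'), IsFactorMap (d l) (r l) (d l') (r l') (p0 h) (p1 h))
    (hd : ∀ l, IsLocalHomeomorph (d l)) {l0 : Λ} (φ : OpenPartialHomeomorph (E l0) (V l0))
    (hφ : d l0 = φ) {ψ : LimPt V p0 → LimPt E p1}
    (hψ : ∀ v y, y ∈ φ.target → v.pt l0 = ↑y → (ψ v).pt l0 = ↑(φ.symm y) ∧ (ψ v).LiesOver d v)
    {ν : Λ} (hν : l0 ≤ ν) {v₀ : LimPt V p0} (hv₀ : v₀.pt l0 ∈ ((↑) : V l0 → _) '' φ.target) :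
    ContinuousWithinAt (fun v => (ψ v).pt ν) {v | v.pt l0 ∈ ((↑) : V l0 → _) '' φ.target} v₀ := by
  obtain ⟨y₀, hy₀, hv₀y₀⟩ := hv₀
  obtain ⟨hψ₀, hlies₀⟩ := hψ v₀ y₀ hy₀ hv₀y₀.symm
  obtain ⟨xb, hxb⟩ := ne_infty_iff_exists.mp ((ψ v₀).pt_ne_infty_of_le
    (fun _ _ h => (hfac h).map_infty1) hν (hψ₀ ▸ coe_ne_infty _))
  obtain ⟨χ, hxbχ, hχ⟩ := hd ν xb
  -- near `v₀`, the lift at level `ν` is read off through the chart `χ` of `d ν` at `xb`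
  let G : LimPt V p0 → OnePoint (E ν) := fun v => onePointLift (fun y => ↑(χ.symm y)) (v.pt ν)
  have hv₀ν : v₀.pt ν = ↑(χ xb) := by rw [hlies₀ ν xb hxb.symm, hχ]
  have hG₀ : G v₀ = ↑xb := by
    simp only [G, hv₀ν]
    exact congrArg _ (χ.left_inv hxbχ)
  have hG : ContinuousAt G v₀ := by
    have hlift : ContinuousAt (onePointLift fun y : V ν => (↑(χ.symm y) : OnePoint (E ν)))
        (v₀.pt ν) := by
      rw [hv₀ν, OnePoint.continuousAt_coe]
      exact continuous_coe.continuousAt.comp (χ.continuousAt_symm (χ.map_source hxbχ))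
    exact hlift.comp (continuous_pt_apply ν).continuousAt
  have hN1 : {v : LimPt V p0 | v.pt ν ∈ ((↑) : V ν → _) '' χ.target} ∈ 𝓝 v₀ :=
    (isOpen_setOf_pt_mem_image_coe ν χ.open_target).mem_nhds ⟨_, χ.map_source hxbχ, hv₀ν.symm⟩
  have hN2 : {v | p1 hν (G v) ∈ ((↑) : E l0 → _) '' φ.source} ∈ 𝓝 v₀ :=
    ((hfac hν).continuous_m1.continuousAt.comp hG).preimage_mem_nhds
      ((isOpenEmbedding_coe.isOpenMap _ φ.open_source).mem_nhds ⟨φ.symm y₀, φ.map_target hy₀,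
        by rw [Function.comp_apply, hG₀, hxb, (ψ v₀).compat, hψ₀]⟩)
  refine hG.continuousWithinAt.congr_of_eventuallyEq ?_ (by rw [hG₀, hxb])
  filter_upwards [self_mem_nhdsWithin, nhdsWithin_le_nhds hN1, nhdsWithin_le_nhds hN2]
    with v ⟨y, hy, hvy⟩ ⟨yν, hyν, hvyν⟩ ⟨w, hw, hGw⟩
  have hGv : G v = ↑(χ.symm yν) := by
    simp only [G, ← hvyν]
    rfl
  obtain ⟨hψl0, hlies⟩ := hψ v y hy hvy.symm
  rw [hGv] at hGw ⊢
  refine pt_eq_of_injOn hfac hlies hν (hφ ▸ φ.injOn) (φ.map_target hy) hψl0 ?_ hw hGw.symm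
  rw [← hvyν, hχ, χ.right_inv hyν]

variable [IsDirected Λ (· ≤ ·)]

theorem continuous_of_liesOver (hinf1 : ∀ ⦃l l' : Λ⦄ (h : l ≤ l'), p1 h ∞ = ∞)
    (hcont0 : ∀ ⦃l l' : Λ⦄ (h : l ≤ l'), Continuous (p0 h)) {q : ∀ l, E l → V l}
    (hq : ∀ l, Continuous (q l)) {g : LimPt E p1 → LimPt V p0}
    (hg : ∀ e : LimPt E p1, e.LiesOver q (g e)) : Continuous g := by
  refine isEmbedding_pt.continuous_iff.mpr
    (continuous_pi fun l => continuous_iff_continuousAt.mpr fun e₀ => ?_)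
  obtain ⟨l1, hl1⟩ := e₀.exists_ne_infty
  obtain ⟨ν, hlν, hl1ν⟩ := directed_of (· ≤ ·) l l1
  have hne := e₀.pt_ne_infty_of_le hinf1 hl1ν hl1
  have hlift : ContinuousAt (onePointLift fun x : E ν => (↑(q ν x) : OnePoint (V ν)))
      (e₀.pt ν) := by
    obtain ⟨x₀, hx₀⟩ := ne_infty_iff_exists.mp hne
    rw [← hx₀, OnePoint.continuousAt_coe]
    exact (continuous_coe.comp (hq ν)).continuousAt
  refine ((hcont0 hlν).continuousAt.comp
    (hlift.comp (continuous_pt_apply ν).continuousAt)).congr_of_eventuallyEq ?_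
  filter_upwards [(isOpen_range_coe.preimage (continuous_pt_apply ν)).mem_nhds
    (ne_infty_iff_exists.mp hne)] with e ⟨x, hx⟩
  simp only [Function.comp_apply, ← hx, ← (g e).compat hlν, hg e ν x hx.symm]
  rfl

theorem eq_of_liesOver
    (hfac : ∀ ⦃l l' : Λ⦄ (h : l ≤ l'), IsFactorMap (d l) (r l) (d l') (r l') (p0 h) (p1 h))
    {e e' : LimPt E p1} {v : LimPt V p0} (he : e.LiesOver d v) (he' : e'.LiesOver d v)
    {l0 : Λ} {x : E l0} (hx : e.pt l0 = ↑x) (hx' : e'.pt l0 = ↑x) : e = e' := by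
  refine eq_of_forall_ge_pt_eq l0 fun ν hν => ?_
  obtain ⟨z, hz, -⟩ := existsUnique_lift_of_le hfac hν v (he l0 x hx)
  rw [pt_eq_of_liesOver hfac he hν hx hz, pt_eq_of_liesOver hfac he' hν hx' hz]

theorem exists_liesOver_pt_eq
    (hfac : ∀ ⦃l l' : Λ⦄ (h : l ≤ l'), IsFactorMap (d l) (r l) (d l') (r l') (p0 h) (p1 h))
    (hp1 : IsTransitiveSystem p1) (v : LimPt V p0) {l0 : Λ} {x : E l0}
    (hx : v.pt l0 = ↑(d l0 x)) : ∃ e : LimPt E p1, e.pt l0 = ↑x ∧ e.LiesOver d v := by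
  classical
  have hlift := fun {ν : Λ} (h : l0 ≤ ν) => existsUnique_lift_of_le hfac h v hx
  let f : ∀ ν, OnePoint (E ν) := fun ν => if h : l0 ≤ ν then ↑(hlift h).exists.choose else ∞
  have hf_of_ge : ∀ {ν} (h : l0 ≤ ν), f ν = ↑(hlift h).exists.choose := fun h => dif_pos h
  have hf : ∀ ⦃ν ν' : Λ⦄ (_ : l0 ≤ ν) (h : ν ≤ ν'), p1 h (f ν') = f ν := by
    intro ν ν' hν h
    obtain ⟨hz1, hz2⟩ := (hlift (hν.trans h)).exists.choose_spec
    set z := (hlift (hν.trans h)).exists.choose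
    obtain ⟨w, hw⟩ : ∃ w : E ν, ↑w = p1 h ↑z := ne_infty_iff_exists.mp fun hinf => by
      rw [← hp1 hν h, hinf, (hfac hν).map_infty1] at hz1
      exact coe_ne_infty _ hz1.symm
    have hw_lift : p1 hν ↑w = ↑x ∧ v.pt ν = ↑(d ν w) := by
      refine ⟨by rw [hw, hp1, hz1], ?_⟩
      rw [((hfac h).compat z w hw.symm).2, ← hz2, v.compat]
    rw [hf_of_ge (hν.trans h), hf_of_ge hν, ← hw,
      (hlift hν).unique hw_lift (hlift hν).exists.choose_spec]
  have hne : f l0 ≠ ∞ := by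
    rw [hf_of_ge le_rfl]
    exact coe_ne_infty _
  refine ⟨ofGE hp1 l0 f hf hne, ?_, fun l y hy => ?_⟩
  · rw [ofGE_pt le_rfl le_rfl, hf_of_ge le_rfl]
    exact (hlift le_rfl).exists.choose_spec.1
  · obtain ⟨ν, hlν, hl0ν⟩ := directed_of (· ≤ ·) l l0
    obtain ⟨-, hz2⟩ := (hlift hl0ν).exists.choose_spec
    have hzy : p1 hlν ↑(hlift hl0ν).exists.choose = ↑y := by
      rw [← hf_of_ge hl0ν, ← ofGE_pt_of_ge (hp := hp1) (hf := hf) (hne := hne) hl0ν,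
        (ofGE hp1 l0 f hf hne).compat, hy]
    rw [← v.compat hlν, hz2, ← ((hfac hlν).compat _ y hzy).2]

theorem continuousOn_lift
    (hfac : ∀ ⦃l l' : Λ⦄ (h : l ≤ l'), IsFactorMap (d l) (r l) (d l') (r l') (p0 h) (p1 h))
    (hd : ∀ l, IsLocalHomeomorph (d l)) {l0 : Λ} (φ : OpenPartialHomeomorph (E l0) (V l0))
    (hφ : d l0 = φ) {ψ : LimPt V p0 → LimPt E p1}
    (hψ : ∀ v y, y ∈ φ.target → v.pt l0 = ↑y → (ψ v).pt l0 = ↑(φ.symm y) ∧ (ψ v).LiesOver d v) :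
    ContinuousOn ψ {v | v.pt l0 ∈ ((↑) : V l0 → _) '' φ.target} := by
  rw [isEmbedding_pt.continuousOn_iff, continuousOn_pi]
  intro μ
  obtain ⟨ν, hμν, hl0ν⟩ := directed_of (· ≤ ·) μ l0
  have hproj : (fun v => (pt ∘ ψ) v μ) = fun v => p1 hμν ((ψ v).pt ν) :=
    funext fun v => ((ψ v).compat hμν).symm
  rw [hproj]
  exact (hfac hμν).continuous_m1.comp_continuousOn
    fun v₀ hv₀ => continuousWithinAt_pt_of_lift hfac hd φ hφ hψ hl0ν hv₀

theorem isLocalHomeomorph_of_liesOver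
    (hfac : ∀ ⦃l l' : Λ⦄ (h : l ≤ l'), IsFactorMap (d l) (r l) (d l') (r l') (p0 h) (p1 h))
    (hp1 : IsTransitiveSystem p1) (hd : ∀ l, IsLocalHomeomorph (d l))
    {dlim : LimPt E p1 → LimPt V p0} (hdlim : ∀ e : LimPt E p1, e.LiesOver d (dlim e)) :
    IsLocalHomeomorph dlim := by
  intro e₀
  obtain ⟨l0, hl0⟩ := e₀.exists_ne_infty
  obtain ⟨x₀, hx₀⟩ := ne_infty_iff_exists.mp hl0
  obtain ⟨φ, hx₀φ, hφ⟩ := hd l0 x₀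
  have hlift : ∀ v : LimPt V p0, ∃ e : LimPt E p1, ∀ y, y ∈ φ.target → v.pt l0 = ↑y →
      e.pt l0 = ↑(φ.symm y) ∧ e.LiesOver d v := by
    intro v
    by_cases hv : ∃ y ∈ φ.target, v.pt l0 = ↑y
    · obtain ⟨y, hy, hvy⟩ := hv
      obtain ⟨e, he⟩ := exists_liesOver_pt_eq hfac hp1 v (x := φ.symm y)
        (by rw [hvy, hφ, φ.right_inv hy])
      refine ⟨e, fun y' _ hvy' => ?_⟩
      obtain rfl : y' = y := coe_injective (hvy'.symm.trans hvy)
      exact he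
    · exact ⟨e₀, fun y hy hvy => (hv ⟨y, hy, hvy⟩).elim⟩
  choose ψ hψ using hlift
  have hinf1 : ∀ ⦃l l' : Λ⦄ (h : l ≤ l'), p1 h ∞ = ∞ := fun _ _ h => (hfac h).map_infty1
  refine ⟨{ toFun := dlim, invFun := ψ
            source := {e | e.pt l0 ∈ ((↑) : E l0 → _) '' φ.source}
            target := {v | v.pt l0 ∈ ((↑) : V l0 → _) '' φ.target}
            map_source' := ?_, map_target' := ?_, left_inv' := ?_, right_inv' := ?_
            open_source := isOpen_setOf_pt_mem_image_coe l0 φ.open_source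
            open_target := isOpen_setOf_pt_mem_image_coe l0 φ.open_target
            continuousOn_toFun := (continuous_of_liesOver hinf1
              (fun _ _ h => (hfac h).continuous_m0) (fun l => (hd l).continuous) hdlim).continuousOn
            continuousOn_invFun := continuousOn_lift hfac hd φ hφ hψ }, ⟨x₀, hx₀φ, hx₀⟩, rfl⟩
  · rintro e ⟨x, hx, hex⟩
    exact ⟨φ x, φ.map_source hx, by rw [hdlim e l0 x hex.symm, hφ]⟩
  · rintro v ⟨y, hy, hvy⟩
    exact ⟨φ.symm y, φ.map_target hy, (hψ v y hy hvy.symm).1.symm⟩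
  · rintro e ⟨x, hx, hex⟩
    obtain ⟨hψl0, hψlies⟩ := hψ (dlim e) (φ x) (φ.map_source hx)
      (by rw [hdlim e l0 x hex.symm, hφ])
    exact eq_of_liesOver hfac hψlies (hdlim e) (by rw [hψl0, φ.left_inv hx]) hex.symm
  · rintro v ⟨y, hy, hvy⟩
    exact (hdlim (ψ v)).unique hinf1 (hψ v y hy hvy.symm).2

end LimPt

end Graph

theorem statement9_general
    {Λ : Type*} [Preorder Λ] [IsDirected Λ (· ≤ ·)]
    {V E : Λ → Type*}
    [∀ l, TopologicalSpace (V l)] [∀ l, TopologicalSpace (E l)]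
    [∀ l, T2Space (V l)] [∀ l, T2Space (E l)]
    [∀ l, LocallyCompactSpace (V l)] [∀ l, LocallyCompactSpace (E l)]
    (d r : ∀ l, E l → V l)
    (hd : ∀ l, IsLocalHomeomorph (d l)) (hr : ∀ l, Continuous (r l))
    (p0 : ∀ ⦃l l' : Λ⦄, l ≤ l' → OnePoint (V l') → OnePoint (V l))
    (p1 : ∀ ⦃l l' : Λ⦄, l ≤ l' → OnePoint (E l') → OnePoint (E l))
    (hfac : ∀ ⦃l l' : Λ⦄ (h : l ≤ l'), IsFactorMap (d l) (r l) (d l') (r l') (p0 h) (p1 h))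
    (hcomp0 : ∀ ⦃l l' l'' : Λ⦄ (h : l ≤ l') (h' : l' ≤ l'') (x : OnePoint (V l'')),
      p0 h (p0 h' x) = p0 (h.trans h') x)
    (hcomp1 : ∀ ⦃l l' l'' : Λ⦄ (h : l ≤ l') (h' : l' ≤ l'') (x : OnePoint (E l'')),
      p1 h (p1 h' x) = p1 (h.trans h') x) :
    (∀ e : LimPt E p1, ∃! v : LimPt V p0,
        ∀ (l : Λ) (el : E l), e.pt l = ↑el → v.pt l = ↑(d l el)) ∧
      (∀ e : LimPt E p1, ∃! v : LimPt V p0,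
        ∀ (l : Λ) (el : E l), e.pt l = ↑el → v.pt l = ↑(r l el)) ∧
      (∀ dlim : LimPt E p1 → LimPt V p0,
        (∀ (e : LimPt E p1) (l : Λ) (el : E l), e.pt l = ↑el → (dlim e).pt l = ↑(d l el)) →
        IsLocalHomeomorph dlim) ∧
      (∀ rlim : LimPt E p1 → LimPt V p0,
        (∀ (e : LimPt E p1) (l : Λ) (el : E l), e.pt l = ↑el → (rlim e).pt l = ↑(r l el)) →
        Continuous rlim) ∧
      T2Space (LimPt V p0) ∧ LocallyCompactSpace (LimPt V p0) ∧
      T2Space (LimPt E p1) ∧ LocallyCompactSpace (LimPt E p1) := by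
  have hinf1 : ∀ ⦃l l' : Λ⦄ (h : l ≤ l'), p1 h ∞ = ∞ := fun _ _ h => (hfac h).map_infty1
  have hcont0 : ∀ ⦃l l' : Λ⦄ (h : l ≤ l'), Continuous (p0 h) :=
    fun _ _ h => (hfac h).continuous_m0
  have hcont1 : ∀ ⦃l l' : Λ⦄ (h : l ≤ l'), Continuous (p1 h) :=
    fun _ _ h => (hfac h).continuous_m1
  refine ⟨LimPt.existsUnique_liesOver hinf1 hcomp0 d
      fun _ _ h x' x hx => ((hfac h).compat x' x hx).2,
    LimPt.existsUnique_liesOver hinf1 hcomp0 r fun _ _ h x' x hx => ((hfac h).compat x' x hx).1,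
    fun dlim hdlim => LimPt.isLocalHomeomorph_of_liesOver hfac hcomp1 hd hdlim,
    fun rlim hrlim => LimPt.continuous_of_liesOver hinf1 hcont0 hr hrlim,
    LimPt.t2Space, LimPt.locallyCompactSpace hcont0, LimPt.t2Space,
    LimPt.locallyCompactSpace hcont1⟩

/-- For a projective system of topological graphs over a directed set `Λ`,
the coordinatewise maps `d` and `r` on the projective limit are well defined (exist and are
unique), `d` is a local homeomorphism and `r` is continuous; moreover the limit spaces are
locally compact Hausdorff, so the projective limit is a topological graph. -/
theorem statement9
    {Λ : Type*} [Preorder Λ] [IsDirected Λ (· ≤ ·)] [Nonempty Λ]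
    {V E : Λ → Type*}
    [∀ l, TopologicalSpace (V l)] [∀ l, TopologicalSpace (E l)]
    [∀ l, T2Space (V l)] [∀ l, T2Space (E l)]
    [∀ l, LocallyCompactSpace (V l)] [∀ l, LocallyCompactSpace (E l)]
    (d r : ∀ l, E l → V l)
    (hd : ∀ l, IsLocalHomeomorph (d l)) (hr : ∀ l, Continuous (r l))
    (p0 : ∀ ⦃l l' : Λ⦄, l ≤ l' → OnePoint (V l') → OnePoint (V l))
    (p1 : ∀ ⦃l l' : Λ⦄, l ≤ l' → OnePoint (E l') → OnePoint (E l))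
    (hfac : ∀ ⦃l l' : Λ⦄ (h : l ≤ l'), IsFactorMap (d l) (r l) (d l') (r l') (p0 h) (p1 h))
    (hid0 : ∀ (l : Λ) (h : l ≤ l) (x : OnePoint (V l)), p0 h x = x)
    (hid1 : ∀ (l : Λ) (h : l ≤ l) (x : OnePoint (E l)), p1 h x = x)
    (hcomp0 : ∀ ⦃l l' l'' : Λ⦄ (h : l ≤ l') (h' : l' ≤ l'') (x : OnePoint (V l'')),
      p0 h (p0 h' x) = p0 (h.trans h') x)
    (hcomp1 : ∀ ⦃l l' l'' : Λ⦄ (h : l ≤ l') (h' : l' ≤ l'') (x : OnePoint (E l'')),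
      p1 h (p1 h' x) = p1 (h.trans h') x) :
    (∀ e : LimPt E p1, ∃! v : LimPt V p0,
        ∀ (l : Λ) (el : E l), e.pt l = ↑el → v.pt l = ↑(d l el)) ∧
      (∀ e : LimPt E p1, ∃! v : LimPt V p0,
        ∀ (l : Λ) (el : E l), e.pt l = ↑el → v.pt l = ↑(r l el)) ∧
      (∀ dlim : LimPt E p1 → LimPt V p0,
        (∀ (e : LimPt E p1) (l : Λ) (el : E l), e.pt l = ↑el → (dlim e).pt l = ↑(d l el)) →
        IsLocalHomeomorph dlim) ∧
      (∀ rlim : LimPt E p1 → LimPt V p0,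
        (∀ (e : LimPt E p1) (l : Λ) (el : E l), e.pt l = ↑el → (rlim e).pt l = ↑(r l el)) →
        Continuous rlim) ∧
      T2Space (LimPt V p0) ∧ LocallyCompactSpace (LimPt V p0) ∧
      T2Space (LimPt E p1) ∧ LocallyCompactSpace (LimPt E p1) :=
  statement9_general d r hd hr p0 p1 hfac hcomp0 hcomp1

end TopGraphAux
end

section
/- Let ({E_λ}_{λ∈Λ}, {m_{λ,λ'}}_{λ⪯λ'}) be a projective system of topological graphs over a directed set Λ, and let E = (E^0, E^1, d, r) be its projective limit. Then for each λ0 ∈ Λ, the pair of coordinate projections m_{λ0} = (m_{λ0}^0, m_{λ0}^1) is a factor map from E to E_{λ0}. -/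
open Set Filter OnePoint

namespace TopGraphAux

section Aux

variable {Λ : Type*} [Preorder Λ] {X : Λ → Type*} [∀ l, TopologicalSpace (X l)]
  {m : ∀ ⦃l l' : Λ⦄, l ≤ l' → OnePoint (X l') → OnePoint (X l)}

theorem LimPt.ext' {a b : LimPt X m} (h : a.pt = b.pt) : a = b := by
  cases a; cases b; cases h; rfl

theorem isInducing_pt :
    Topology.IsInducing (LimPt.pt : LimPt X m → ∀ l, OnePoint (X l)) := ⟨rfl⟩

theorem continuous_onePointLift_pt [∀ l, T2Space (X l)] [∀ l, LocallyCompactSpace (X l)]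
    (hm : ∀ ⦃l l' : Λ⦄ (h : l ≤ l'), Continuous (m h)) (l0 : Λ) :
    Continuous (onePointLift fun v : LimPt X m => v.pt l0) := by
  have hptc : Continuous (LimPt.pt : LimPt X m → ∀ l, OnePoint (X l)) :=
    continuous_induced_dom
  have hcoord : Continuous (fun v : LimPt X m => v.pt l0) :=
    (continuous_apply l0).comp hptc
  rw [OnePoint.continuous_iff]
  refine ⟨?_, hcoord⟩
  show Tendsto (fun v : LimPt X m => v.pt l0) (coclosedCompact _) (nhds (∞ : OnePoint (X l0)))
  rw [OnePoint.hasBasis_nhds_infty.tendsto_right_iff]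
  rintro s ⟨hscl, hsc⟩
  have hCcl : IsClosed (((↑) '' s : Set (OnePoint (X l0)))) :=
    OnePoint.isClosed_image_coe.2 ⟨hscl, hsc⟩
  set A : Set (LimPt X m) := {v | v.pt l0 ∈ ((↑) '' s : Set (OnePoint (X l0)))} with hA
  have hAcl : IsClosed A := hCcl.preimage hcoord
  set S : Set (∀ l, OnePoint (X l)) :=
    (⋂ (l : Λ) (l' : Λ) (h : l ≤ l'), {g | m h (g l') = g l}) ∩
      ((fun g : ∀ l, OnePoint (X l) => g l0) ⁻¹' ((↑) '' s)) with hS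
  have hScl : IsClosed S := by
    refine IsClosed.inter ?_ (hCcl.preimage (continuous_apply l0))
    refine isClosed_iInter fun l => isClosed_iInter fun l' => isClosed_iInter fun h => ?_
    exact isClosed_eq ((hm h).comp (continuous_apply l')) (continuous_apply l)
  have hScomp : IsCompact S := hScl.isCompact
  have himg : LimPt.pt '' A = S := by
    ext g
    constructor
    · rintro ⟨w, hw, rfl⟩
      refine ⟨?_, hw⟩
      simp only [Set.mem_iInter, Set.mem_setOf_eq]
      exact fun l l' h => w.compat h
    · rintro ⟨hcomp, hg⟩
      simp only [Set.mem_iInter, Set.mem_setOf_eq] at hcomp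
      have hg' : g l0 ∈ ((↑) '' s : Set (OnePoint (X l0))) := hg
      have hne : g l0 ≠ ∞ := fun h => OnePoint.infty_notMem_image_coe (h ▸ hg')
      exact ⟨⟨g, fun l l' h => hcomp l l' h, ⟨l0, hne⟩⟩, hg, rfl⟩
  have hAcomp : IsCompact A := isInducing_pt.isCompact_iff.2 (himg ▸ hScomp)
  have hmem : Aᶜ ∈ coclosedCompact (LimPt X m) :=
    hAcomp.compl_mem_coclosedCompact_of_isClosed hAcl
  filter_upwards [hmem] with w hw
  rw [← OnePoint.compl_image_coe]
  exact hw

end Aux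

/-- For a projective system of topological graphs, the pair of coordinate
projections `m_{λ0} = (m_{λ0}⁰, m_{λ0}¹)` is a factor map from the projective limit `E` to
`E_{λ0}`. -/
theorem statement10
    {Λ : Type*} [Preorder Λ] [IsDirected Λ (· ≤ ·)] [Nonempty Λ]
    {V E : Λ → Type*}
    [∀ l, TopologicalSpace (V l)] [∀ l, TopologicalSpace (E l)]
    [∀ l, T2Space (V l)] [∀ l, T2Space (E l)]
    [∀ l, LocallyCompactSpace (V l)] [∀ l, LocallyCompactSpace (E l)]
    (d r : ∀ l, E l → V l)
    (hd : ∀ l, IsLocalHomeomorph (d l)) (hr : ∀ l, Continuous (r l))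
    (p0 : ∀ ⦃l l' : Λ⦄, l ≤ l' → OnePoint (V l') → OnePoint (V l))
    (p1 : ∀ ⦃l l' : Λ⦄, l ≤ l' → OnePoint (E l') → OnePoint (E l))
    (hfac : ∀ ⦃l l' : Λ⦄ (h : l ≤ l'), IsFactorMap (d l) (r l) (d l') (r l') (p0 h) (p1 h))
    (hid0 : ∀ (l : Λ) (h : l ≤ l) (x : OnePoint (V l)), p0 h x = x)
    (hid1 : ∀ (l : Λ) (h : l ≤ l) (x : OnePoint (E l)), p1 h x = x)
    (hcomp0 : ∀ ⦃l l' l'' : Λ⦄ (h : l ≤ l') (h' : l' ≤ l'') (x : OnePoint (V l'')),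
      p0 h (p0 h' x) = p0 (h.trans h') x)
    (hcomp1 : ∀ ⦃l l' l'' : Λ⦄ (h : l ≤ l') (h' : l' ≤ l'') (x : OnePoint (E l'')),
      p1 h (p1 h' x) = p1 (h.trans h') x)
    (dlim rlim : LimPt E p1 → LimPt V p0)
    (hdlim : ∀ (e : LimPt E p1) (l : Λ) (el : E l),
      e.pt l = ↑el → (dlim e).pt l = ↑(d l el))
    (hrlim : ∀ (e : LimPt E p1) (l : Λ) (el : E l),
      e.pt l = ↑el → (rlim e).pt l = ↑(r l el))
    (l0 : Λ) :
    IsFactorMap (d l0) (r l0) dlim rlim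
      (onePointLift fun v : LimPt V p0 => v.pt l0)
      (onePointLift fun e : LimPt E p1 => e.pt l0) := by
  refine ⟨continuous_onePointLift_pt (fun l l' h => (hfac h).continuous_m0) l0,
    continuous_onePointLift_pt (fun l l' h => (hfac h).continuous_m1) l0,
    rfl, rfl, ?_, ?_⟩
  · -- compat
    intro e e' h
    have he : e.pt l0 = ↑e' := h
    constructor
    · exact (hrlim e l0 e' he).symm
    · exact (hdlim e l0 e' he).symm
  · -- lift
    intro e' v hv
    have hv' : v.pt l0 = ↑(d l0 e') := hv.symm
    -- vertex components at levels ≥ l0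
    have hvert : ∀ (μ : Λ) (h : l0 ≤ μ), ∃ w : V μ, v.pt μ = ↑w := by
      intro μ h
      cases hpt : v.pt μ with
      | infty =>
        exfalso
        have hc := v.compat h
        rw [hpt] at hc
        rw [hv'] at hc
        exact OnePoint.coe_ne_infty _ (hc.symm.trans ((hfac h).map_infty0))
      | coe w => exact ⟨w, rfl⟩
    -- edge lifts at levels ≥ l0
    have hlift : ∀ (μ : Λ) (h : l0 ≤ μ),
        ∃! eμ : E μ, p1 h ↑eμ = (↑e' : OnePoint (E l0)) ∧ d μ eμ = (hvert μ h).choose := by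
      intro μ h
      refine (hfac h).lift e' (hvert μ h).choose ?_
      rw [← (hvert μ h).choose_spec, v.compat h, hv']
    set eAt : ∀ (μ : Λ), l0 ≤ μ → E μ := fun μ h => (hlift μ h).choose with heAt
    have heAt1 : ∀ (μ : Λ) (h : l0 ≤ μ), p1 h ↑(eAt μ h) = (↑e' : OnePoint (E l0)) :=
      fun μ h => (hlift μ h).choose_spec.1.1
    have heAt2 : ∀ (μ : Λ) (h : l0 ≤ μ), d μ (eAt μ h) = (hvert μ h).choose :=
      fun μ h => (hlift μ h).choose_spec.1.2
    -- key compatibility of the lifts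
    have keyA : ∀ (μ ν : Λ) (hμ : l0 ≤ μ) (hν : l0 ≤ ν) (hμν : μ ≤ ν),
        p1 hμν ↑(eAt ν hν) = ↑(eAt μ hμ) := by
      intro μ ν hμ hν hμν
      cases hx : p1 hμν ↑(eAt ν hν) with
      | infty =>
        exfalso
        have := hcomp1 hμ hμν (↑(eAt ν hν))
        rw [hx, (hfac hμ).map_infty1] at this
        have h2 : p1 (hμ.trans hμν) ↑(eAt ν hν) = (↑e' : OnePoint (E l0)) := by
          have := heAt1 ν hν
          rwa [show hν = hμ.trans hμν from rfl] at this
        exact OnePoint.coe_ne_infty _ (h2.symm.trans this.symm)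
      | coe x =>
        have hc := (hfac hμν).compat (eAt ν hν) x hx
        have hdx : d μ x = (hvert μ hμ).choose := by
          have h3 : (↑(d μ x) : OnePoint (V μ)) = p0 hμν ↑(d ν (eAt ν hν)) := hc.2
          rw [heAt2 ν hν, ← (hvert ν hν).choose_spec, v.compat hμν,
            (hvert μ hμ).choose_spec] at h3
          exact OnePoint.coe_eq_coe.1 h3
        have hpx : p1 hμ ↑x = (↑e' : OnePoint (E l0)) := by
          rw [← hx, hcomp1 hμ hμν]
          have := heAt1 ν hν
          rwa [show hν = hμ.trans hμν from rfl] at this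
        exact congrArg _ ((hlift μ hμ).choose_spec.2 x ⟨hpx, hdx⟩)
    -- choice of upper bounds
    have hsel : ∀ l : Λ, ∃ c, l ≤ c ∧ l0 ≤ c := fun l => exists_ge_ge l l0
    choose μsel hμ1 hμ2 using hsel
    set ptE : ∀ l, OnePoint (E l) := fun l => p1 (hμ1 l) ↑(eAt (μsel l) (hμ2 l)) with hptE
    -- at levels ≥ l0 the thread has genuine edge coordinates
    have keyB : ∀ (lam : Λ) (h : l0 ≤ lam), ptE lam = ↑(eAt lam h) := by
      intro lam h
      exact keyA lam (μsel lam) h (hμ2 lam) (hμ1 lam)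
    -- coherence of the thread
    have keyC : ∀ ⦃l l' : Λ⦄ (h : l ≤ l'), p1 h (ptE l') = ptE l := by
      intro l l' h
      obtain ⟨ν, h1, h2⟩ := exists_ge_ge (μsel l) (μsel l')
      have hν0 : l0 ≤ ν := (hμ2 l).trans h1
      have e1 : ptE l' = p1 ((hμ1 l').trans h2) ↑(eAt ν hν0) := by
        rw [← hcomp1 (hμ1 l') h2, keyA (μsel l') ν (hμ2 l') hν0 h2]
      have e2 : ptE l = p1 ((hμ1 l).trans h1) ↑(eAt ν hν0) := by
        rw [← hcomp1 (hμ1 l) h1, keyA (μsel l) ν (hμ2 l) hν0 h1]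
      rw [e1, e2, hcomp1]
    have hptEl0 : ptE l0 = (↑e' : OnePoint (E l0)) := by
      rw [keyB l0 le_rfl, ← hid1 l0 le_rfl ↑(eAt l0 le_rfl), heAt1 l0 le_rfl]
    set eLim : LimPt E p1 :=
      ⟨ptE, keyC, ⟨l0, by rw [hptEl0]; exact OnePoint.coe_ne_infty _⟩⟩ with heLim
    have hdeLim : dlim eLim = v := by
      apply LimPt.ext'
      funext l
      have hmu : (dlim eLim).pt (μsel l) = v.pt (μsel l) := by
        have hE : eLim.pt (μsel l) = ↑(eAt (μsel l) (hμ2 l)) := keyB (μsel l) (hμ2 l)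
        rw [hdlim eLim (μsel l) (eAt (μsel l) (hμ2 l)) hE, heAt2 (μsel l) (hμ2 l),
          ← (hvert (μsel l) (hμ2 l)).choose_spec]
      rw [← (dlim eLim).compat (hμ1 l), hmu, v.compat (hμ1 l)]
    refine ⟨eLim, ⟨hptEl0, hdeLim⟩, ?_⟩
    -- uniqueness
    rintro f ⟨hf1, hf2⟩
    have hf1' : f.pt l0 = (↑e' : OnePoint (E l0)) := hf1
    have hfAt : ∀ (lam : Λ) (h : l0 ≤ lam), f.pt lam = ↑(eAt lam h) := by
      intro lam h
      cases hx : f.pt lam with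
      | infty =>
        exfalso
        have := f.compat h
        rw [hx, (hfac h).map_infty1, hf1'] at this
        exact OnePoint.coe_ne_infty _ this.symm
      | coe x =>
        have hpx : p1 h ↑x = (↑e' : OnePoint (E l0)) := by
          rw [← hx, f.compat h, hf1']
        have hdx : d lam x = (hvert lam h).choose := by
          have h4 : (dlim f).pt lam = ↑(d lam x) := hdlim f lam x hx
          rw [hf2, (hvert lam h).choose_spec] at h4
          exact (OnePoint.coe_eq_coe.1 h4).symm
        exact congrArg _ ((hlift lam h).choose_spec.2 x ⟨hpx, hdx⟩)
    apply LimPt.ext'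
    funext l
    show f.pt l = ptE l
    rw [← f.compat (hμ1 l), hfAt (μsel l) (hμ2 l)]

end TopGraphAux
end
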